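/- For every A > 0 there exists a constant M = M(A) such that for all α ∈ [0, A], √(2cosh(α)² − 2φ(α)) + sinh(α) ≤ M · φ(α) · √(1 − 1/φ(α)²), where φ(α) = ∫₀¹ cosh(α cos(2πs)) ds. -/

import Mathlib

open Real MeasureTheory Set

noncomputable def phi (α : ℝ) : ℝ := ∫ s in (0:ℝ)..1, Real.cosh (α * Real.cos (2 * Real.pi * s))

/-!
From `cosh x ≥ 1 + x²/2` and `∫₀¹ cos²(2πs) ds = 1/2` one gets `φ(α) ≥ 1 + α²/4`, hence
`φ √(1 - 1/φ²) = √(φ² - 1) ≥ α/√2`. On the other side `φ ≥ 1` and `cosh² - 1 = sinh²` bound the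
left-hand side by `(1 + √2) sinh α ≤ (1 + √2) α cosh A`. Both sides vanish linearly at `α = 0`,
so `M = (1 + √2) √2 cosh A` works.
-/

namespace Real

theorem one_add_sq_div_two_le_cosh (x : ℝ) : 1 + x ^ 2 / 2 ≤ cosh x := by
  have h := sum_le_hasSum (Finset.range 2)
    (fun n _ => div_nonneg (pow_mul x 2 n ▸ by positivity) (by positivity)) (hasSum_cosh x)
  norm_num [Finset.sum_range_succ] at h
  exact h

theorem sinh_le_mul_cosh {x : ℝ} (hx : 0 ≤ x) : sinh x ≤ x * cosh x := by
  refine hasSum_le (fun n => ?_) (hasSum_sinh x) ((hasSum_cosh x).mul_left x)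
  rw [pow_succ', mul_div_assoc]
  gcongr
  omega

theorem integral_cos_two_pi_mul_sq : ∫ s in (0:ℝ)..1, cos (2 * π * s) ^ 2 = 1 / 2 := by
  rw [intervalIntegral.integral_comp_mul_left (fun x => cos x ^ 2) (by positivity), integral_cos_sq]
  simp only [mul_one, cos_two_pi, sin_two_pi, mul_zero, cos_zero, sin_zero, sub_self, zero_add,
    sub_zero, smul_eq_mul]
  field_simp

theorem sqrt_two_mul_cosh_sq_sub_le {x p : ℝ} (hx : 0 ≤ x) (hp : 1 ≤ p) :
    √(2 * cosh x ^ 2 - 2 * p) ≤ √2 * sinh x := by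
  rw [← sqrt_sq (sinh_nonneg_iff.mpr hx), ← sqrt_mul zero_le_two]
  exact sqrt_le_sqrt (by nlinarith [cosh_sq x])

theorem mul_sqrt_one_sub_one_div_sq {p : ℝ} (hp : 0 < p) :
    p * √(1 - 1 / p ^ 2) = √(p ^ 2 - 1) := by
  rw [← sqrt_sq hp.le, ← sqrt_mul (sq_nonneg p), sqrt_sq hp.le, mul_sub,
    mul_one_div_cancel (by positivity), mul_one]

end Real

theorem one_add_sq_div_four_le_phi (α : ℝ) : 1 + α ^ 2 / 4 ≤ phi α := by
  have hquad : ∫ s in (0:ℝ)..1, (1 + α ^ 2 / 2 * cos (2 * π * s) ^ 2) = 1 + α ^ 2 / 4 := by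
    rw [intervalIntegral.integral_add intervalIntegrable_const
      (Continuous.intervalIntegrable (by fun_prop) _ _),
      intervalIntegral.integral_const_mul, integral_cos_two_pi_mul_sq]
    rw [intervalIntegral.integral_const, sub_zero, one_smul]
    ring
  rw [← hquad, phi]
  refine intervalIntegral.integral_mono zero_le_one
    (Continuous.intervalIntegrable (by fun_prop) _ _)
    (Continuous.intervalIntegrable (by fun_prop) _ _) fun s => ?_
  have := one_add_sq_div_two_le_cosh (α * cos (2 * π * s))
  linarith [mul_pow α (cos (2 * π * s)) 2]

theorem one_le_phi (α : ℝ) : 1 ≤ phi α := by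
  linarith [one_add_sq_div_four_le_phi α, sq_nonneg α]

theorem sq_div_two_le_phi_sq_sub_one (α : ℝ) : α ^ 2 / 2 ≤ phi α ^ 2 - 1 := by
  nlinarith [one_add_sq_div_four_le_phi α, sq_nonneg α]

theorem amplitude_bound :
    ∀ A : ℝ, 0 < A → ∃ M : ℝ, ∀ α ∈ Set.Icc (0:ℝ) A,
      Real.sqrt (2 * Real.cosh α ^ 2 - 2 * phi α) + Real.sinh α ≤
        M * phi α * Real.sqrt (1 - 1 / phi α ^ 2) := by
  intro A hA
  refine ⟨(1 + √2) * √2 * cosh A, fun α ⟨hα0, hαA⟩ => ?_⟩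
  have hcosh : cosh α ≤ cosh A := by
    rw [cosh_le_cosh, abs_of_nonneg hα0, abs_of_pos hA]
    exact hαA
  have hphi : α ≤ √2 * √(phi α ^ 2 - 1) := by
    rw [← sqrt_mul zero_le_two]
    exact le_sqrt_of_sq_le (by linarith [sq_div_two_le_phi_sq_sub_one α])
  calc √(2 * cosh α ^ 2 - 2 * phi α) + sinh α
      ≤ (1 + √2) * sinh α := by linarith [sqrt_two_mul_cosh_sq_sub_le hα0 (one_le_phi α)]
    _ ≤ (1 + √2) * (α * cosh A) := by
        gcongr
        exact (sinh_le_mul_cosh hα0).trans (by gcongr)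
    _ ≤ (1 + √2) * (√2 * √(phi α ^ 2 - 1) * cosh A) := by gcongr
    _ = (1 + √2) * √2 * cosh A * phi α * √(1 - 1 / phi α ^ 2) := by
        rw [mul_assoc _ (phi α), mul_sqrt_one_sub_one_div_sq (by linarith [one_le_phi α])]
        ring
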